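/- A cell c of UD^nΓ is collapsible if and only if c contains an order-respecting edge and, e denoting the minimal order-respecting edge of c, every vertex v of c with v < ι(e) in the vertex order is blocked in c. -/

import Mathlib

open SimpleGraph

attribute [local instance] Classical.propDecidable

namespace GraphBraid

/-- The degree of a vertex, defined via `Set.ncard` to avoid decidability assumptions. -/
noncomputable def ncdeg {V : Type} (H : SimpleGraph V) (v : V) : ℕ := (H.neighborSet v).ncard

/-- The basic setup: a finite connected simple graph `G` with a spanning tree `T`,
a root `root` of degree one in `T`, and a labelling of the edges of `T` incident to each
vertex `u` by the numbers `0, …, d_T(u) - 1`, where the edge towards the root receives the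
label `0` (and the unique edge at the root receives the label `1`). -/
structure Setup (V : Type) [Fintype V] [DecidableEq V] where
  G : SimpleGraph V
  G_conn : G.Connected
  T : SimpleGraph V
  T_le : T ≤ G
  T_tree : T.IsTree
  root : V
  root_deg : ncdeg T root = 1
  label : V → V → ℕ
  label_bij : ∀ u : V, u ≠ root → Set.BijOn (label u) (T.neighborSet u) (Set.Iio (ncdeg T u))
  label_zero : ∀ u : V, u ≠ root → ∀ w : V, T.Adj u w →
    (label u w = 0 ↔ T.dist root w + 1 = T.dist root u)
  label_root : ∀ w : V, T.Adj root w → label root w = 1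

namespace Setup

variable {V : Type} [Fintype V] [DecidableEq V] (S : Setup V)

/-- The unique geodesic (path) in the tree `T` from `u` to `w`. -/
noncomputable def geod (u w : V) : S.T.Walk u w := (S.T_tree.existsUnique_path u w).choose

/-- `g(u,w)`: the label at `u` of the first edge of the tree geodesic from `u` to `w`,
with `g(u,u) = 0`. -/
noncomputable def gfun (u w : V) : ℕ :=
  if u = w then 0 else S.label u ((S.geod u w).getVert 1)

lemma exists_wedge (u w : V) :
    ∃ x : V, (x ∈ (S.geod S.root u).support ∧ x ∈ (S.geod S.root w).support) ∧
      ∀ y : V, y ∈ (S.geod S.root u).support → y ∈ (S.geod S.root w).support →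
        S.T.dist S.root y ≤ S.T.dist S.root x := by
  classical
  have hne : ((S.geod S.root u).support.toFinset ∩
      (S.geod S.root w).support.toFinset).Nonempty :=
    ⟨S.root, by simp [SimpleGraph.Walk.start_mem_support]⟩
  obtain ⟨x, hx, hmax⟩ := Finset.exists_max_image _ (fun y => S.T.dist S.root y) hne
  simp only [Finset.mem_inter, List.mem_toFinset] at hx hmax
  exact ⟨x, ⟨hx.1, hx.2⟩, fun y h1 h2 => hmax y ⟨h1, h2⟩⟩

/-- `u ∧ w`: the vertex farthest from the root lying on both tree geodesics from the
root to `u` and from the root to `w`. -/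
noncomputable def wedge (u w : V) : V := (S.exists_wedge u w).choose

/-- The order on vertices: `u ≤ w` iff `u ∧ w = u`, or `u ∧ w ≠ u` and
`g(u ∧ w, u) < g(u ∧ w, w)`. -/
def vle (u w : V) : Prop :=
  S.wedge u w = u ∨ (S.wedge u w ≠ u ∧ S.gfun (S.wedge u w) u < S.gfun (S.wedge u w) w)

/-- The associated strict order on vertices. -/
def vlt (u w : V) : Prop := S.vle u w ∧ u ≠ w

/-- `ι(e)`: the larger endpoint of the edge `e` in the vertex order. -/
noncomputable def iota (e : Sym2 V) : V :=
  if S.vle (Quot.out e).1 (Quot.out e).2 then (Quot.out e).2 else (Quot.out e).1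

/-- `τ(e)`: the smaller endpoint of the edge `e` in the vertex order. -/
noncomputable def tau (e : Sym2 V) : V :=
  if S.vle (Quot.out e).1 (Quot.out e).2 then (Quot.out e).1 else (Quot.out e).2

/-- `e(v)`: the edge of `T` incident to `v` lying on the tree geodesic from `v` to the root. -/
noncomputable def eV (v : V) : Sym2 V := s(v, (S.geod v S.root).getVert 1)

/-- A cell of `UD^n Γ`: an `n`-element set whose elements are vertices (encoded as
diagonal elements of `Sym2 V`) and closed edges of `G`, no two distinct elements of which
share a vertex. -/
def IsCell (n : ℕ) (c : Finset (Sym2 V)) : Prop :=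
  c.card = n ∧ (∀ s ∈ c, s.IsDiag ∨ s ∈ S.G.edgeSet) ∧
    ∀ s ∈ c, ∀ t ∈ c, s ≠ t → ∀ x : V, x ∈ s → x ∉ t

/-- The dimension of a cell: the number of edges it contains. -/
noncomputable def dim (c : Finset (Sym2 V)) : ℕ := (c.filter (fun s => ¬ s.IsDiag)).card

/-- A vertex `v` is blocked in `c` if `v` is the root, or `e(v)` shares a vertex with some
element of `c` other than `v`. -/
def Blocked (c : Finset (Sym2 V)) (v : V) : Prop :=
  v = S.root ∨ ∃ s ∈ c, s ≠ Sym2.diag v ∧ ∃ x : V, x ∈ S.eV v ∧ x ∈ s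

/-- A vertex `v` is unblocked in `c` if it belongs to `c` and is not blocked. -/
def Unblocked (c : Finset (Sym2 V)) (v : V) : Prop := Sym2.diag v ∈ c ∧ ¬ S.Blocked c v

/-- The elementary reduction of `c` from the vertex `v`: replace `v` by the edge `e(v)`. -/
noncomputable def redFrom (c : Finset (Sym2 V)) (v : V) : Finset (Sym2 V) :=
  insert (S.eV v) (c.erase (Sym2.diag v))

/-- `c'` is the principal elementary reduction of `c`: it is the elementary reduction of `c`
from the smallest unblocked vertex of `c`. -/
def PrincipalRedOf (c c' : Finset (Sym2 V)) : Prop :=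
  ∃ v : V, S.Unblocked c v ∧ (∀ u : V, S.Unblocked c u → S.vle v u) ∧ c' = S.redFrom c v

/-- Auxiliary definition of redundancy, by induction on the dimension: a cell of
dimension `i` is redundant iff it has an unblocked vertex and it is not the principal
elementary reduction of a redundant cell of dimension `i - 1`. -/
def RedundantAux (n : ℕ) : ℕ → Finset (Sym2 V) → Prop
  | 0, c => ∃ v, S.Unblocked c v
  | (i + 1), c => (∃ v, S.Unblocked c v) ∧
      ¬ ∃ c₀, S.IsCell n c₀ ∧ dim c₀ = i ∧ RedundantAux n i c₀ ∧ S.PrincipalRedOf c₀ c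

/-- A cell is redundant if the discrete vector field `W` is defined on it. -/
def Redundant (n : ℕ) (c : Finset (Sym2 V)) : Prop := S.RedundantAux n (dim c) c

/-- A cell is collapsible if it lies in the image of `W`. -/
def Collapsible (n : ℕ) (c : Finset (Sym2 V)) : Prop :=
  ∃ c₀, S.IsCell n c₀ ∧ S.Redundant n c₀ ∧ S.PrincipalRedOf c₀ c

/-- A cell is critical if it is neither redundant nor collapsible. -/
def Critical (n : ℕ) (c : Finset (Sym2 V)) : Prop :=
  ¬ S.Redundant n c ∧ ¬ S.Collapsible n c

/-- An edge `e` of the cell `c` is order-respecting in `c` if `e` lies in `T` and every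
vertex `v ∈ c` such that `e(v)` and `e` share the vertex `τ(e)` satisfies `v > ι(e)`. -/
def OrderResp (c : Finset (Sym2 V)) (e : Sym2 V) : Prop :=
  e ∈ c ∧ e ∈ S.T.edgeSet ∧
    ∀ v : V, v ≠ S.root → Sym2.diag v ∈ c → S.tau e ∈ S.eV v → S.vlt (S.iota e) v

/-- `e` is the minimal order-respecting edge of `c`. -/
def MinOrderResp (c : Finset (Sym2 V)) (e : Sym2 V) : Prop :=
  S.OrderResp c e ∧ ∀ e' : Sym2 V, S.OrderResp c e' → S.vle (S.iota e) (S.iota e')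

/-- `c'` is a face of `c` obtained by replacing one edge of `c` by one of its endpoints. -/
def IsFace (c' c : Finset (Sym2 V)) : Prop :=
  ∃ (e : Sym2 V) (x : V), e ∈ c ∧ ¬ e.IsDiag ∧ x ∈ e ∧ c' = insert (Sym2.diag x) (c.erase e)

/-- `Γ` is sufficiently subdivided for `n`: every path between distinct vertices of degree
`≠ 2` passes through at least `n - 1` edges, and every cycle has length at least `n + 1`. -/
def SuffSubdiv (n : ℕ) : Prop :=
  (∀ u v : V, u ≠ v → ncdeg S.G u ≠ 2 → ncdeg S.G v ≠ 2 →
    ∀ p : S.G.Walk u v, p.IsPath → n - 1 ≤ p.length) ∧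
  (∀ v : V, ∀ p : S.G.Walk v v, p.IsCycle → n + 1 ≤ p.length)

end Setup

namespace Setup

open SimpleGraph Walk

variable {V : Type} [Fintype V] [DecidableEq V] (S : Setup V)

lemma geod_isPath (u w : V) : (S.geod u w).IsPath :=
  (S.T_tree.existsUnique_path u w).choose_spec.1

lemma geod_unique {u w : V} (p : S.T.Walk u w) (hp : p.IsPath) : p = S.geod u w :=
  (S.T_tree.existsUnique_path u w).choose_spec.2 p hp

lemma T_conn : S.T.Connected := S.T_tree.isConnected

lemma geod_reverse (u w : V) : S.geod w u = (S.geod u w).reverse :=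
  (S.geod_unique _ ((S.geod_isPath u w).reverse)).symm

/-- A walk in the tree whose length equals the distance is a path. -/
lemma isPath_of_length_eq_dist {u w : V} (p : S.T.Walk u w)
    (h : p.length = S.T.dist u w) : p.IsPath := by
  induction p with
  | nil => exact IsPath.nil
  | @cons a b c hab q ih =>
    have hd1 : S.T.dist a b ≤ 1 := by
      simpa using SimpleGraph.dist_le (Walk.cons hab Walk.nil)
    have htri : S.T.dist a c ≤ S.T.dist a b + S.T.dist b c :=
      S.T_conn.dist_triangle
    have hle : S.T.dist b c ≤ q.length := SimpleGraph.dist_le q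
    have hq : q.length = S.T.dist b c := by
      simp only [Walk.length_cons] at h; omega
    have hqp := ih hq
    rw [Walk.cons_isPath_iff]
    refine ⟨hqp, fun ha => ?_⟩
    have := SimpleGraph.dist_le (q.dropUntil a ha)
    have := Walk.length_dropUntil_le q ha
    simp only [Walk.length_cons] at h
    omega

lemma length_geod (u w : V) : (S.geod u w).length = S.T.dist u w := by
  obtain ⟨p, hp⟩ := S.T_conn.exists_walk_length_eq_dist u w
  rw [S.geod_unique p (S.isPath_of_length_eq_dist p hp)] at hp
  exact hp

lemma geod_takeUntil {u w x : V} (hx : x ∈ (S.geod u w).support) :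
    (S.geod u w).takeUntil x hx = S.geod u x :=
  S.geod_unique _ ((S.geod_isPath u w).takeUntil hx)

lemma geod_dropUntil {u w x : V} (hx : x ∈ (S.geod u w).support) :
    (S.geod u w).dropUntil x hx = S.geod x w :=
  S.geod_unique _ ((S.geod_isPath u w).dropUntil hx)

lemma geod_split {u w x : V} (hx : x ∈ (S.geod u w).support) :
    S.geod u w = (S.geod u x).append (S.geod x w) := by
  conv_lhs => rw [← (S.geod u w).take_spec hx]
  rw [S.geod_takeUntil hx, S.geod_dropUntil hx]

lemma dist_add_of_mem_geod {u w x : V} (hx : x ∈ (S.geod u w).support) :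
    S.T.dist u x + S.T.dist x w = S.T.dist u w := by
  have h := congrArg Walk.length (S.geod_split hx)
  rw [Walk.length_append, S.length_geod, S.length_geod, S.length_geod] at h
  omega

lemma dist_eq_zero {u w : V} (h : S.T.dist u w = 0) : u = w :=
  (S.T_conn.dist_eq_zero_iff.mp h)

lemma eq_of_mem_geod_dist_eq {u w x y : V} (hx : x ∈ (S.geod u w).support)
    (hy : y ∈ (S.geod u w).support) (h : S.T.dist u x = S.T.dist u y) : x = y := by
  have hy' : y ∈ ((S.geod u x).append (S.geod x w)).support := by
    rw [← S.geod_split hx]; exact hy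
  have h1 := S.dist_add_of_mem_geod hx
  rw [Walk.mem_support_append_iff] at hy'
  rcases hy' with hy' | hy'
  · have h2 := S.dist_add_of_mem_geod hy'
    have : S.T.dist y x = 0 := by omega
    exact (S.dist_eq_zero this).symm
  · have h2 := S.dist_add_of_mem_geod hy'
    have h3 := S.dist_add_of_mem_geod hy
    have : S.T.dist x y = 0 := by omega
    exact S.dist_eq_zero this

/-- `x` is an ancestor of `y`: `x` lies on the tree geodesic from the root to `y`. -/
def anc (x y : V) : Prop := x ∈ (S.geod S.root y).support

lemma anc_refl (x : V) : S.anc x x := Walk.end_mem_support _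

lemma root_anc (x : V) : S.anc S.root x := Walk.start_mem_support _

lemma dist_le_of_anc {x y : V} (h : S.anc x y) :
    S.T.dist S.root x ≤ S.T.dist S.root y := by
  have := S.dist_add_of_mem_geod h; omega

lemma anc_antisymm {x y : V} (h1 : S.anc x y) (h2 : S.anc y x) : x = y := by
  refine S.eq_of_mem_geod_dist_eq h1 (S.anc_refl y) ?_
  have := S.dist_le_of_anc h1
  have := S.dist_le_of_anc h2
  omega

lemma anc_trans {x y z : V} (h1 : S.anc x y) (h2 : S.anc y z) : S.anc x z := by
  unfold anc at *
  rw [S.geod_split h2, Walk.mem_support_append_iff]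
  exact Or.inl h1

lemma anc_of_dist_le {x y z : V} (hx : S.anc x z) (hy : S.anc y z)
    (h : S.T.dist S.root x ≤ S.T.dist S.root y) : S.anc x y := by
  have hx' : x ∈ ((S.geod S.root y).append (S.geod y z)).support := by
    rw [← S.geod_split hy]; exact hx
  rw [Walk.mem_support_append_iff] at hx'
  rcases hx' with hx' | hx'
  · exact hx'
  · have h1 := S.dist_add_of_mem_geod hx'
    have h2 := S.dist_add_of_mem_geod hy
    have h3 := S.dist_add_of_mem_geod hx
    have : S.T.dist y x = 0 := by omega
    rw [S.dist_eq_zero this]; exact S.anc_refl _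

lemma dist_anc_add {x y z : V} (h1 : S.anc x y) (h2 : S.anc y z) :
    S.T.dist x y + S.T.dist y z = S.T.dist x z := by
  have ha := S.dist_add_of_mem_geod h1
  have hb := S.dist_add_of_mem_geod h2
  have hc := S.dist_add_of_mem_geod (S.anc_trans h1 h2)
  omega

lemma geod_split3 {x y z : V} (h1 : S.anc x y) (h2 : S.anc y z) :
    S.geod x z = (S.geod x y).append (S.geod y z) := by
  refine (S.geod_unique _ (S.isPath_of_length_eq_dist _ ?_)).symm
  rw [Walk.length_append, S.length_geod, S.length_geod]
  exact S.dist_anc_add h1 h2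

lemma mem_geod_of_anc {x y z : V} (h1 : S.anc x y) (h2 : S.anc y z) :
    y ∈ (S.geod x z).support := by
  rw [S.geod_split3 h1 h2, Walk.mem_support_append_iff]
  exact Or.inl (Walk.end_mem_support _)

lemma gfun_eq_of_anc {x y z : V} (h1 : S.anc x y) (h2 : S.anc y z) (hxy : x ≠ y) :
    S.gfun x z = S.gfun x y := by
  have hxz : x ≠ z := by
    rintro rfl
    exact hxy (S.anc_antisymm h1 h2)
  have hlen : 1 ≤ (S.geod x y).length := by
    rw [S.length_geod]
    have := S.T_conn.pos_dist_of_ne hxy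
    omega
  unfold gfun
  rw [if_neg hxz, if_neg hxy]
  congr 1
  rw [S.geod_split3 h1 h2, Walk.getVert_append]
  rcases Nat.lt_or_ge 1 (S.geod x y).length with h | h
  · rw [if_pos h]
  · have hl : (S.geod x y).length = 1 := by omega
    rw [if_neg (by omega)]
    rw [hl]
    simp only [Nat.sub_self, Walk.getVert_zero]
    rw [← hl, Walk.getVert_length]

lemma wedge_anc_left (u w : V) : S.anc (S.wedge u w) u :=
  (S.exists_wedge u w).choose_spec.1.1

lemma wedge_anc_right (u w : V) : S.anc (S.wedge u w) w :=
  (S.exists_wedge u w).choose_spec.1.2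

lemma wedge_max {u w y : V} (h1 : S.anc y u) (h2 : S.anc y w) :
    S.T.dist S.root y ≤ S.T.dist S.root (S.wedge u w) :=
  (S.exists_wedge u w).choose_spec.2 y h1 h2

lemma anc_wedge {u w y : V} (h1 : S.anc y u) (h2 : S.anc y w) :
    S.anc y (S.wedge u w) :=
  S.anc_of_dist_le h1 (S.wedge_anc_left u w) (S.wedge_max h1 h2)

lemma wedge_eq_left {u w : V} (h : S.anc u w) : S.wedge u w = u :=
  S.anc_antisymm (S.wedge_anc_left u w) (S.anc_wedge (S.anc_refl u) h)

lemma wedge_self (u : V) : S.wedge u u = u := S.wedge_eq_left (S.anc_refl u)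

lemma wedge_comm (u w : V) : S.wedge u w = S.wedge w u := by
  have h1 := S.anc_wedge (S.wedge_anc_right u w) (S.wedge_anc_left u w)
  have h2 := S.anc_wedge (S.wedge_anc_right w u) (S.wedge_anc_left w u)
  exact S.anc_antisymm h1 h2

lemma gfun_self (u : V) : S.gfun u u = 0 := by simp [gfun]

lemma adj_dist_one {a b : V} (h : S.T.Adj a b) : S.T.dist a b = 1 := by
  have h1 : S.T.dist a b ≤ 1 := by
    simpa using SimpleGraph.dist_le (Walk.cons h Walk.nil)
  have h2 := S.T_conn.pos_dist_of_ne h.ne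
  omega

lemma getVert_one_mem_support {u w : V} (h : u ≠ w) :
    (S.geod u w).getVert 1 ∈ (S.geod u w).support := by
  rw [Walk.mem_support_iff_exists_getVert]
  refine ⟨1, rfl, ?_⟩
  rw [S.length_geod]
  have := S.T_conn.pos_dist_of_ne h
  omega

lemma adj_getVert_one {u w : V} (h : u ≠ w) : S.T.Adj u ((S.geod u w).getVert 1) := by
  have h0 : 0 < (S.geod u w).length := by
    rw [S.length_geod]; exact S.T_conn.pos_dist_of_ne h
  simpa using (S.geod u w).adj_getVert_succ h0

/-- If `m = wedge u w` differs from both `u` and `w`, the first edges of the geodesics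
from `m` to `u` and to `w` carry distinct labels. -/
lemma wedge_gfun_ne {u w : V} (hu : S.wedge u w ≠ u) (hw : S.wedge u w ≠ w) :
    S.gfun (S.wedge u w) u ≠ S.gfun (S.wedge u w) w := by
  set m := S.wedge u w with hm
  set a := (S.geod m u).getVert 1 with ha
  set b := (S.geod m w).getVert 1 with hb
  have hau : a ∈ (S.geod m u).support := S.getVert_one_mem_support hu
  have hbw : b ∈ (S.geod m w).support := S.getVert_one_mem_support hw
  have hadja : S.T.Adj m a := S.adj_getVert_one hu
  have hadjb : S.T.Adj m b := S.adj_getVert_one hw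
  have hancau : S.anc a u := by
    unfold anc
    rw [S.geod_split (S.wedge_anc_left u w), Walk.mem_support_append_iff]
    exact Or.inr hau
  have hancbw : S.anc b w := by
    unfold anc
    rw [S.geod_split (S.wedge_anc_right u w), Walk.mem_support_append_iff]
    exact Or.inr hbw
  have hda : S.T.dist S.root a = S.T.dist S.root m + 1 := by
    have h1 := S.dist_add_of_mem_geod hancau
    have h2 := S.dist_add_of_mem_geod hau
    have h3 := S.dist_add_of_mem_geod (S.wedge_anc_left u w)
    have h4 := S.adj_dist_one hadja
    rw [← hm] at h3
    omega
  have hdb : S.T.dist S.root b = S.T.dist S.root m + 1 := by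
    have h1 := S.dist_add_of_mem_geod hancbw
    have h2 := S.dist_add_of_mem_geod hbw
    have h3 := S.dist_add_of_mem_geod (S.wedge_anc_right u w)
    have h4 := S.adj_dist_one hadjb
    rw [← hm] at h3
    omega
  clear_value m a b
  have hab : a ≠ b := by
    rintro rfl
    have := S.wedge_max hancau hancbw
    rw [← hm] at this
    omega
  have hgu : S.gfun m u = S.label m a := by unfold gfun; rw [if_neg hu, ← ha]
  have hgw : S.gfun m w = S.label m b := by unfold gfun; rw [if_neg hw, ← hb]
  rw [hgu, hgw]
  intro heq
  by_cases hmr : m = S.root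
  · obtain ⟨x, hx⟩ := Set.ncard_eq_one.mp S.root_deg
    have h1 : a ∈ S.T.neighborSet S.root := hmr ▸ hadja
    have h2 : b ∈ S.T.neighborSet S.root := hmr ▸ hadjb
    rw [hx, Set.mem_singleton_iff] at h1 h2
    exact hab (h1.trans h2.symm)
  · exact hab ((S.label_bij m hmr).injOn hadja hadjb heq)

lemma vle_refl (u : V) : S.vle u u := Or.inl (S.wedge_self u)

lemma vle_of_anc {u w : V} (h : S.anc u w) : S.vle u w := Or.inl (S.wedge_eq_left h)

lemma vle_root (w : V) : S.vle S.root w := S.vle_of_anc (S.root_anc w)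

lemma vle_antisymm {u w : V} (h1 : S.vle u w) (h2 : S.vle w u) : u = w := by
  rcases h1 with h1 | ⟨h1, h1'⟩
  · rcases h2 with h2 | ⟨h2, h2'⟩
    · rw [← h1, S.wedge_comm, h2]
    · rw [S.wedge_comm, h1] at h2 h2'
      rw [S.gfun_self] at h2'
      omega
  · rcases h2 with h2 | ⟨h2, h2'⟩
    · rw [S.wedge_comm, h2] at h1 h1'
      rw [S.gfun_self] at h1'
      omega
    · rw [S.wedge_comm] at h2'
      omega

lemma vle_total (u w : V) : S.vle u w ∨ S.vle w u := by
  by_cases h1 : S.wedge u w = u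
  · exact Or.inl (Or.inl h1)
  by_cases h2 : S.wedge u w = w
  · exact Or.inr (Or.inl (by rw [S.wedge_comm]; exact h2))
  have hne := S.wedge_gfun_ne h1 h2
  rcases Nat.lt_or_ge (S.gfun (S.wedge u w) u) (S.gfun (S.wedge u w) w) with h | h
  · exact Or.inl (Or.inr ⟨h1, h⟩)
  · refine Or.inr (Or.inr ⟨by rw [← S.wedge_comm]; exact h2, ?_⟩)
    rw [← S.wedge_comm]
    omega

lemma vle_of_gfun_lt {u x y : V} (hyu : S.anc y u) (hyx : S.anc y x) (hne : y ≠ u)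
    (hlt : S.gfun y u < S.gfun y x) : S.vle u x := by
  have hyc : S.anc y (S.wedge u x) := S.anc_wedge hyu hyx
  by_cases hc : y = S.wedge u x
  · refine Or.inr ⟨by rw [← hc]; exact hne, ?_⟩
    rw [← hc]; exact hlt
  · exfalso
    have h1 : S.gfun y u = S.gfun y (S.wedge u x) :=
      S.gfun_eq_of_anc hyc (S.wedge_anc_left u x) hc
    have h2 : S.gfun y x = S.gfun y (S.wedge u x) :=
      S.gfun_eq_of_anc hyc (S.wedge_anc_right u x) hc
    omega

lemma vle_trans {u w x : V} (h1 : S.vle u w) (h2 : S.vle w x) : S.vle u x := by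
  rcases h1 with h1 | ⟨h1, h1'⟩
  · -- u is an ancestor of w
    have hanc_uw : S.anc u w := by have h := S.wedge_anc_right u w; rw [h1] at h; exact h
    rcases h2 with h2 | ⟨h2, h2'⟩
    · exact S.vle_of_anc (S.anc_trans hanc_uw (by rw [← h2]; exact S.wedge_anc_right w x))
    · have hBw : S.anc (S.wedge w x) w := S.wedge_anc_left w x
      have hBx : S.anc (S.wedge w x) x := S.wedge_anc_right w x
      rcases Nat.le_total (S.T.dist S.root u) (S.T.dist S.root (S.wedge w x)) with hd | hd
      · exact S.vle_of_anc (S.anc_trans (S.anc_of_dist_le hanc_uw hBw hd) hBx)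
      · have hBu : S.anc (S.wedge w x) u := S.anc_of_dist_le hBw hanc_uw hd
        by_cases hBu' : S.wedge w x = u
        · exact S.vle_of_anc (by rw [← hBu']; exact hBx)
        · have heq : S.gfun (S.wedge w x) w = S.gfun (S.wedge w x) u :=
            S.gfun_eq_of_anc hBu hanc_uw hBu'
          exact S.vle_of_gfun_lt hBu hBx hBu' (by omega)
  · have hAu : S.anc (S.wedge u w) u := S.wedge_anc_left u w
    have hAw : S.anc (S.wedge u w) w := S.wedge_anc_right u w
    have hAw' : S.wedge u w ≠ w := by
      intro he
      rw [he, S.gfun_self] at h1'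
      omega
    rcases h2 with h2 | ⟨h2, h2'⟩
    · have hanc_wx : S.anc w x := by rw [← h2]; exact S.wedge_anc_right w x
      have heq : S.gfun (S.wedge u w) x = S.gfun (S.wedge u w) w :=
        S.gfun_eq_of_anc hAw hanc_wx hAw'
      exact S.vle_of_gfun_lt hAu (S.anc_trans hAw hanc_wx) h1 (by omega)
    · have hBw : S.anc (S.wedge w x) w := S.wedge_anc_left w x
      have hBx : S.anc (S.wedge w x) x := S.wedge_anc_right w x
      by_cases hAB : S.wedge u w = S.wedge w x
      · exact S.vle_of_gfun_lt hAu (by rw [hAB]; exact hBx) h1 (by rw [hAB] at h1' ⊢; omega)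
      rcases Nat.le_total (S.T.dist S.root (S.wedge u w))
          (S.T.dist S.root (S.wedge w x)) with hd | hd
      · have hancAB : S.anc (S.wedge u w) (S.wedge w x) := S.anc_of_dist_le hAw hBw hd
        have e1 : S.gfun (S.wedge u w) w = S.gfun (S.wedge u w) (S.wedge w x) :=
          S.gfun_eq_of_anc hancAB hBw hAB
        have e2 : S.gfun (S.wedge u w) x = S.gfun (S.wedge u w) (S.wedge w x) :=
          S.gfun_eq_of_anc hancAB hBx hAB
        exact S.vle_of_gfun_lt hAu (S.anc_trans hancAB hBx) h1 (by omega)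
      · have hancBA : S.anc (S.wedge w x) (S.wedge u w) := S.anc_of_dist_le hBw hAw hd
        have hBA : S.wedge w x ≠ S.wedge u w := fun h => hAB h.symm
        have e1 : S.gfun (S.wedge w x) u = S.gfun (S.wedge w x) (S.wedge u w) :=
          S.gfun_eq_of_anc hancBA hAu hBA
        have e2 : S.gfun (S.wedge w x) w = S.gfun (S.wedge w x) (S.wedge u w) :=
          S.gfun_eq_of_anc hancBA hAw hBA
        have hBu : S.wedge w x ≠ u := by
          intro he
          exact h1 (S.anc_antisymm hAu (by rw [he] at hancBA; exact hancBA))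
        exact S.vle_of_gfun_lt (S.anc_trans hancBA hAu) hBx hBu (by omega)

lemma vlt_of_vle_ne {u w : V} (h : S.vle u w) (hne : u ≠ w) : S.vlt u w := ⟨h, hne⟩

lemma not_vle_of_vlt {u w : V} (h : S.vlt u w) : ¬ S.vle w u := fun h' =>
  h.2 (S.vle_antisymm h.1 h')

lemma vle_of_not_vle {u w : V} (h : ¬ S.vle u w) : S.vle w u :=
  (S.vle_total u w).resolve_left h

lemma vlt_of_not_vle {u w : V} (h : ¬ S.vle u w) : S.vlt w u :=
  ⟨S.vle_of_not_vle h, fun he => h (he ▸ S.vle_refl u)⟩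

lemma vlt_trans_vle {u w x : V} (h1 : S.vlt u w) (h2 : S.vle w x) : S.vlt u x := by
  refine ⟨S.vle_trans h1.1 h2, fun he => ?_⟩
  subst he
  exact h1.2 (S.vle_antisymm h1.1 h2)

lemma vle_trans_vlt {u w x : V} (h1 : S.vle u w) (h2 : S.vlt w x) : S.vlt u x := by
  refine ⟨S.vle_trans h1 h2.1, fun he => ?_⟩
  subst he
  exact h2.2 (S.vle_antisymm h2.1 h1)

/-- The linear order on `V` induced by `vle`. -/
noncomputable def vLinearOrder : LinearOrder V where
  le := S.vle
  le_refl := S.vle_refl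
  le_trans _ _ _ := S.vle_trans
  le_antisymm _ _ := S.vle_antisymm
  le_total := S.vle_total
  toDecidableLE := fun _ _ => Classical.propDecidable _

lemma exists_vle_min (t : Finset (Sym2 V)) (ht : t.Nonempty) :
    ∃ e ∈ t, ∀ e' ∈ t, S.vle (S.iota e) (S.iota e') := by
  letI := S.vLinearOrder
  obtain ⟨e, he, hmin⟩ := Finset.exists_min_image t (fun e => S.iota e) ht
  exact ⟨e, he, hmin⟩

/-- The parent of a vertex: the next vertex on the geodesic towards the root. -/
noncomputable def par (v : V) : V := (S.geod v S.root).getVert 1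

lemma eV_eq (v : V) : S.eV v = s(v, S.par v) := rfl

lemma geod_self (u : V) : S.geod u u = Walk.nil := (S.geod_unique _ (by simp)).symm

lemma par_root : S.par S.root = S.root := by
  unfold par
  rw [S.geod_self]
  rfl

lemma adj_par {v : V} (h : v ≠ S.root) : S.T.Adj v (S.par v) := S.adj_getVert_one h

lemma anc_par {v : V} (h : v ≠ S.root) : S.anc (S.par v) v := by
  unfold anc
  rw [S.geod_reverse v S.root, Walk.support_reverse, List.mem_reverse]
  exact S.getVert_one_mem_support h

lemma dist_par {v : V} (h : v ≠ S.root) :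
    S.T.dist S.root (S.par v) + 1 = S.T.dist S.root v := by
  have h1 : S.T.dist v (S.par v) + S.T.dist (S.par v) S.root = S.T.dist v S.root :=
    S.dist_add_of_mem_geod (S.getVert_one_mem_support h)
  have h2 := S.adj_dist_one (S.adj_par h)
  have h3 : S.T.dist v S.root = S.T.dist S.root v := S.T.dist_comm
  have h4 : S.T.dist (S.par v) S.root = S.T.dist S.root (S.par v) := S.T.dist_comm
  omega

lemma par_ne {v : V} (h : v ≠ S.root) : S.par v ≠ v := by
  intro he
  have := S.dist_par h
  rw [he] at this
  omega

lemma vlt_par {v : V} (h : v ≠ S.root) : S.vlt (S.par v) v :=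
  ⟨S.vle_of_anc (S.anc_par h), S.par_ne h⟩

/-- Characterization of the parent: the unique neighbor nearer the root. -/
lemma par_unique {a b : V} (hadj : S.T.Adj a b)
    (hd : S.T.dist S.root b + 1 = S.T.dist S.root a) : b = S.par a := by
  have har : a ≠ S.root := by
    intro he
    rw [he] at hd
    simp [SimpleGraph.dist_self] at hd
  have hlen : (Walk.cons hadj (S.geod b S.root)).length = S.T.dist a S.root := by
    rw [Walk.length_cons, S.length_geod]
    have h3 : S.T.dist b S.root = S.T.dist S.root b := S.T.dist_comm
    have h4 : S.T.dist a S.root = S.T.dist S.root a := S.T.dist_comm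
    omega
  have hp := S.isPath_of_length_eq_dist _ hlen
  have := S.geod_unique _ hp
  unfold par
  rw [← this]
  simp [Walk.getVert_cons_succ, Walk.getVert_zero]

lemma eq_wedge_of_mem_both {a b x : V} (h1 : x ∈ (S.geod (S.wedge a b) a).support)
    (h2 : x ∈ (S.geod (S.wedge a b) b).support) : x = S.wedge a b := by
  have ha1 : S.anc x a := by
    unfold anc
    rw [S.geod_split (S.wedge_anc_left a b), Walk.mem_support_append_iff]
    exact Or.inr h1
  have hb1 : S.anc x b := by
    unfold anc
    rw [S.geod_split (S.wedge_anc_right a b), Walk.mem_support_append_iff]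
    exact Or.inr h2
  have hmax := S.wedge_max ha1 hb1
  have e1 := S.dist_add_of_mem_geod h1
  have e2 := S.dist_add_of_mem_geod (S.wedge_anc_left a b)
  have e3 := S.dist_add_of_mem_geod ha1
  exact (S.dist_eq_zero (show S.T.dist (S.wedge a b) x = 0 by omega)).symm

lemma dist_wedge_add (a b : V) :
    S.T.dist a (S.wedge a b) + S.T.dist (S.wedge a b) b = S.T.dist a b := by
  have hW : ((S.geod a (S.wedge a b)).append (S.geod (S.wedge a b) b)).IsPath := by
    rw [Walk.isPath_def, Walk.support_append, List.nodup_append]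
    refine ⟨(S.geod_isPath _ _).support_nodup,
      ((S.geod_isPath _ _).support_nodup).tail, fun x hx1 y hx2 hxy => ?_⟩
    subst hxy
    have hx1' : x ∈ (S.geod (S.wedge a b) a).support := by
      rw [S.geod_reverse, Walk.support_reverse, List.mem_reverse] at hx1
      exact hx1
    have hx2' : x ∈ (S.geod (S.wedge a b) b).support := List.mem_of_mem_tail hx2
    have := S.eq_wedge_of_mem_both hx1' hx2'
    subst this
    have hnd := (S.geod_isPath (S.wedge a b) b).support_nodup
    rw [Walk.support_eq_cons] at hnd
    exact (List.nodup_cons.mp hnd).1 hx2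
  have := congrArg Walk.length (S.geod_unique _ hW)
  rw [Walk.length_append, S.length_geod, S.length_geod, S.length_geod] at this
  exact this

/-- For a tree edge, one endpoint is the parent of the other. -/
lemma adj_par_or {a b : V} (hadj : S.T.Adj a b) : b = S.par a ∨ a = S.par b := by
  have hd1 : S.T.dist a (S.wedge a b) + S.T.dist (S.wedge a b) b = S.T.dist a b :=
    S.dist_wedge_add a b
  have hab : S.T.dist a b = 1 := S.adj_dist_one hadj
  have ha := S.dist_add_of_mem_geod (S.wedge_anc_left a b)
  have hb := S.dist_add_of_mem_geod (S.wedge_anc_right a b)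
  have hcomm1 : S.T.dist a (S.wedge a b) = S.T.dist (S.wedge a b) a := S.T.dist_comm
  rcases Nat.eq_zero_or_pos (S.T.dist a (S.wedge a b)) with h0 | h0
  · -- wedge = a, so a is an ancestor of b, hence a = par b
    have hwa : S.wedge a b = a := S.dist_eq_zero (by omega)
    right
    exact S.par_unique hadj.symm (by omega)
  · have hwb : S.wedge a b = b := S.dist_eq_zero (by omega)
    left
    exact S.par_unique hadj (by omega)

lemma sym2_out_mk (e : Sym2 V) : s((Quot.out e).1, (Quot.out e).2) = e := by
  conv_rhs => rw [← Quot.out_eq e]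

lemma par_not_root_child {v : V} (h : v ≠ S.root) : v ≠ S.par v := (S.par_ne h).symm

lemma eV_mem_edgeSet {v : V} (h : v ≠ S.root) : S.eV v ∈ S.T.edgeSet := by
  rw [S.eV_eq]
  exact S.adj_par h

lemma eV_not_isDiag {v : V} (h : v ≠ S.root) : ¬ (S.eV v).IsDiag := by
  rw [S.eV_eq, Sym2.mk_isDiag_iff]
  exact (S.par_ne h).symm

lemma mem_eV_iff {v x : V} : x ∈ S.eV v ↔ x = v ∨ x = S.par v := by
  rw [S.eV_eq, Sym2.mem_iff]

lemma self_mem_eV (v : V) : v ∈ S.eV v := S.mem_eV_iff.mpr (Or.inl rfl)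

lemma par_mem_eV (v : V) : S.par v ∈ S.eV v := S.mem_eV_iff.mpr (Or.inr rfl)

lemma mem_diag_iff {v x : V} : x ∈ Sym2.diag v ↔ x = v := by
  unfold Sym2.diag
  rw [Sym2.mem_iff, or_self]

/-- Structure of a tree edge: `ι(e)` is the child, `τ(e)` the parent. -/
lemma edge_struct {e : Sym2 V} (he : e ∈ S.T.edgeSet) :
    S.iota e ≠ S.root ∧ S.tau e = S.par (S.iota e) ∧ e = S.eV (S.iota e) ∧
      S.vlt (S.tau e) (S.iota e) := by
  have hout := sym2_out_mk e
  have hadj : S.T.Adj (Quot.out e).1 (Quot.out e).2 := by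
    rw [← SimpleGraph.mem_edgeSet, hout]
    exact he
  set a := (Quot.out e).1 with ha
  set b := (Quot.out e).2 with hb
  have main : ∀ x y : V, S.T.Adj x y → y = S.par x →
      x ≠ S.root ∧ S.vlt y x ∧ ¬ S.vle x y := by
    intro x y hxy hpar
    have hxr : x ≠ S.root := by
      intro he'
      rw [he', S.par_root] at hpar
      exact hxy.ne (he'.trans hpar.symm)
    have hvlt : S.vlt y x := hpar ▸ S.vlt_par hxr
    exact ⟨hxr, hvlt, S.not_vle_of_vlt hvlt⟩
  rcases S.adj_par_or hadj with hpar | hpar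
  · -- b = par a : a is the child
    obtain ⟨hxr, hvlt, hnle⟩ := main a b hadj hpar
    have hiota : S.iota e = a := by unfold iota; rw [← ha, ← hb, if_neg hnle]
    have htau : S.tau e = b := by unfold tau; rw [← ha, ← hb, if_neg hnle]
    rw [hiota, htau]
    exact ⟨hxr, hpar, by rw [← hout, hpar, ← S.eV_eq], hvlt⟩
  · -- a = par b : b is the child
    obtain ⟨hxr, hvlt, hnle⟩ := main b a hadj.symm hpar
    have hle : S.vle a b := hvlt.1
    have hiota : S.iota e = b := by unfold iota; rw [← ha, ← hb, if_pos hle]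
    have htau : S.tau e = a := by unfold tau; rw [← ha, ← hb, if_pos hle]
    rw [hiota, htau]
    refine ⟨hxr, hpar, ?_, hvlt⟩
    rw [← hout, S.eV_eq, ← hpar]
    exact Sym2.eq_swap

lemma iota_mem {e : Sym2 V} (he : e ∈ S.T.edgeSet) : S.iota e ∈ e := by
  obtain ⟨_, _, h3, _⟩ := S.edge_struct he
  have h := S.self_mem_eV (S.iota e)
  rwa [← h3] at h

lemma tau_mem {e : Sym2 V} (he : e ∈ S.T.edgeSet) : S.tau e ∈ e := by
  obtain ⟨_, h2, h3, _⟩ := S.edge_struct he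
  have h := S.par_mem_eV (S.iota e)
  rw [← h2] at h
  rwa [← h3] at h

lemma iota_eV {v : V} (h : v ≠ S.root) :
    S.iota (S.eV v) = v ∧ S.tau (S.eV v) = S.par v := by
  obtain ⟨h1, h2, h3, h4⟩ := S.edge_struct (S.eV_mem_edgeSet h)
  have hmem : S.iota (S.eV v) ∈ S.eV v := by
    have h := S.self_mem_eV (S.iota (S.eV v))
    rwa [← h3] at h
  rcases S.mem_eV_iff.mp hmem with he | he
  · exact ⟨he, by rw [h2, he]⟩
  · exfalso
    have hpr : S.par v ≠ S.root := by
      intro hh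
      rw [← he] at hh
      exact h1 hh
    have hv : v ∈ S.eV (S.par v) := by
      rw [← he, ← h3]
      exact S.self_mem_eV v
    rcases S.mem_eV_iff.mp hv with hv' | hv'
    · exact S.par_ne h hv'.symm
    · have c1 := S.vlt_par h
      have c2 := S.vlt_par hpr
      rw [← hv'] at c2
      exact c1.2 (S.vle_antisymm c1.1 c2.1)

/-- Convenient form of cell disjointness. -/
lemma cell_disj {n : ℕ} {c : Finset (Sym2 V)} (hc : S.IsCell n c) {s t : Sym2 V} {x : V}
    (hs : s ∈ c) (ht : t ∈ c) (hxs : x ∈ s) (hxt : x ∈ t) : s = t := by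
  by_contra hne
  exact hc.2.2 s hs t ht hne x hxs hxt

lemma mem_redFrom_iff {c : Finset (Sym2 V)} {v : V} {s : Sym2 V} :
    s ∈ S.redFrom c v ↔ s = S.eV v ∨ (s ∈ c ∧ s ≠ Sym2.diag v) := by
  unfold redFrom
  rw [Finset.mem_insert, Finset.mem_erase]
  tauto

lemma eV_not_mem {n : ℕ} {c : Finset (Sym2 V)} (hc : S.IsCell n c) {v : V}
    (hv : Sym2.diag v ∈ c) (hr : v ≠ S.root) : S.eV v ∉ c := by
  intro hmem
  have := S.cell_disj hc hmem hv (S.self_mem_eV v) (mem_diag_iff.mpr rfl)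
  exact S.eV_not_isDiag hr (this ▸ Sym2.diag_isDiag v)

lemma unblocked_ne_root {c : Finset (Sym2 V)} {v : V} (h : S.Unblocked c v) :
    v ≠ S.root := fun he => h.2 (Or.inl he)

lemma dim_redFrom {n : ℕ} {c : Finset (Sym2 V)} (hc : S.IsCell n c) {v : V}
    (hv : S.Unblocked c v) : dim (S.redFrom c v) = dim c + 1 := by
  have hr := S.unblocked_ne_root hv
  have hnm : S.eV v ∉ c := S.eV_not_mem hc hv.1 hr
  unfold dim redFrom
  classical
  rw [Finset.filter_insert, if_pos (S.eV_not_isDiag hr), Finset.filter_erase,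
    Finset.erase_eq_of_notMem (by
      intro hmem
      exact (Finset.mem_filter.mp hmem).2 (Sym2.diag_isDiag v)),
    Finset.card_insert_of_notMem (by
      intro hmem
      exact hnm (Finset.mem_filter.mp hmem).1)]

lemma dim_pos_of_collapsible {n : ℕ} {c : Finset (Sym2 V)}
    (h : S.Collapsible n c) : 1 ≤ dim c := by
  obtain ⟨c₀, hcell, _, v, hv, _, hceq⟩ := h
  rw [hceq, S.dim_redFrom hcell hv]
  omega

/-- A cell is redundant iff it has an unblocked vertex and is not collapsible. -/
lemma redundant_iff {n : ℕ} {c : Finset (Sym2 V)} (hc : S.IsCell n c) :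
    S.Redundant n c ↔ (∃ v, S.Unblocked c v) ∧ ¬ S.Collapsible n c := by
  have hr : S.Redundant n c ↔ S.RedundantAux n (dim c) c := Iff.rfl
  rcases hd : dim c with _ | i
  · rw [hr, hd]
    unfold RedundantAux
    have : ¬ S.Collapsible n c := by
      intro h
      have := S.dim_pos_of_collapsible h
      omega
    tauto
  · rw [hr, hd]
    unfold RedundantAux
    constructor
    · rintro ⟨h1, h2⟩
      refine ⟨h1, fun ⟨c₀, hcell, hred, v, hv, hmin, hceq⟩ => h2 ?_⟩
      have hdim : dim c₀ = i := by
        have := S.dim_redFrom hcell hv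
        rw [← hceq, hd] at this
        omega
      refine ⟨c₀, hcell, hdim, ?_, v, hv, hmin, hceq⟩
      have : S.RedundantAux n (dim c₀) c₀ := hred
      rwa [hdim] at this
    · rintro ⟨h1, h2⟩
      refine ⟨h1, fun ⟨c₀, hcell, hdim, hred, hpr⟩ => h2 ?_⟩
      refine ⟨c₀, hcell, ?_, hpr⟩
      show S.RedundantAux n (dim c₀) c₀
      rwa [hdim]

lemma diag_ne_of_edge {e : Sym2 V} (he : e ∈ S.T.edgeSet) (w : V) :
    Sym2.diag w ≠ e := by
  intro h
  exact S.T.not_isDiag_of_mem_edgeSet he (h ▸ Sym2.diag_isDiag w)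

/-- The key induction: classification of collapsible cells, by induction on dimension. -/
lemma collapsible_aux (n : ℕ) : ∀ (k : ℕ) (c : Finset (Sym2 V)), dim c ≤ k →
    S.IsCell n c →
    (S.Collapsible n c ↔
      (∃ e : Sym2 V, S.MinOrderResp c e ∧
        ∀ v : V, Sym2.diag v ∈ c → S.vlt v (S.iota e) → S.Blocked c v)) := by
  intro k
  induction k with
  | zero =>
    intro c hdim hc
    constructor
    · intro h
      have := S.dim_pos_of_collapsible h
      omega
    · rintro ⟨e, ⟨⟨hec, heT, _⟩, _⟩, _⟩
      exfalso
      have : 0 < dim c := Finset.card_pos.mpr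
        ⟨e, Finset.mem_filter.mpr ⟨hec, S.T.not_isDiag_of_mem_edgeSet heT⟩⟩
      omega
  | succ k ih =>
    intro c hdim hc
    constructor
    · -- Forward direction
      rintro ⟨c₀, hc₀, hred₀, v, hunb, hmin, hceq⟩
      have hvr : v ≠ S.root := S.unblocked_ne_root hunb
      obtain ⟨hio, hta⟩ := S.iota_eV hvr
      have heT : S.eV v ∈ S.T.edgeSet := S.eV_mem_edgeSet hvr
      have hdv₀ : Sym2.diag v ∈ c₀ := hunb.1
      have heC : S.eV v ∈ c := by
        rw [hceq]
        exact Finset.mem_insert_self _ _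
      have henc₀ : S.eV v ∉ c₀ := S.eV_not_mem hc₀ hdv₀ hvr
      have hmemc : ∀ s : Sym2 V, s ∈ c ↔ (s = S.eV v ∨ (s ∈ c₀ ∧ s ≠ Sym2.diag v)) := by
        intro s
        rw [hceq]
        exact S.mem_redFrom_iff
      have hdvnc : Sym2.diag v ∉ c := by
        rw [hmemc]
        rintro (h | ⟨h1, h2⟩)
        · exact S.diag_ne_of_edge heT v h
        · exact h2 rfl
      have hdiag_c₀ : ∀ w : V, Sym2.diag w ∈ c → Sym2.diag w ∈ c₀ := by
        intro w hw
        rcases (hmemc _).mp hw with h | h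
        · exact absurd h (S.diag_ne_of_edge heT w)
        · exact h.1
      -- the edge `eV v` is order-respecting in `c`
      have hOR : S.OrderResp c (S.eV v) := by
        refine ⟨heC, heT, fun w hwr hdw htauw => ?_⟩
        rw [hio]
        rw [hta] at htauw
        have hwv : w ≠ v := by
          rintro rfl
          exact hdvnc hdw
        rcases S.mem_eV_iff.mp htauw with hpw | hpw
        · -- the parent of `v` is `w` itself : impossible
          exfalso
          have h1 : S.par v ∈ Sym2.diag w := mem_diag_iff.mpr hpw
          have h2 := S.cell_disj hc hdw heC h1 (S.par_mem_eV v)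
          exact S.diag_ne_of_edge heT w h2
        · -- `w` is a sibling of `v`; it must be unblocked in `c₀`
          have hdw₀ : Sym2.diag w ∈ c₀ := hdiag_c₀ w hdw
          have hunbw : S.Unblocked c₀ w := by
            refine ⟨hdw₀, ?_⟩
            rintro (h | ⟨s, hs, hsne, x, hx1, hx2⟩)
            · exact hwr h
            · rcases S.mem_eV_iff.mp hx1 with hxw | hxp
              · rw [hxw] at hx2
                exact hsne (S.cell_disj hc₀ hs hdw₀ hx2 (mem_diag_iff.mpr rfl))
              · have hxpv : x = S.par v := by rw [hxp, ← hpw]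
                have hsnediag : s ≠ Sym2.diag v := by
                  intro h'
                  rw [h'] at hx2
                  have hxv := mem_diag_iff.mp hx2
                  rw [hxpv] at hxv
                  exact S.par_ne hvr hxv
                have hsc : s ∈ c := (hmemc s).mpr (Or.inr ⟨hs, hsnediag⟩)
                have hse : s = S.eV v :=
                  S.cell_disj hc hsc heC (hxpv ▸ hx2) (S.par_mem_eV v)
                exact henc₀ (hse ▸ hs)
          exact S.vlt_of_vle_ne (hmin w hunbw) (Ne.symm hwv)
      -- every smaller vertex of `c` is blocked in `c`
      have hblk : ∀ u, Sym2.diag u ∈ c → S.vlt u v → S.Blocked c u := by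
        intro u hdu hult
        have huv : u ≠ v := hult.2
        have hdu₀ : Sym2.diag u ∈ c₀ := hdiag_c₀ u hdu
        have hbu₀ : S.Blocked c₀ u := by
          by_contra hnb
          exact (S.not_vle_of_vlt hult) (hmin u ⟨hdu₀, hnb⟩)
        rcases hbu₀ with h | ⟨s, hs, hsne, x, hx1, hx2⟩
        · exact Or.inl h
        · by_cases hsd : s = Sym2.diag v
          · rw [hsd] at hx2
            have hxv := mem_diag_iff.mp hx2
            rw [hxv] at hx1
            rcases S.mem_eV_iff.mp hx1 with h' | h'
            · exact absurd h' (Ne.symm huv)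
            · exact Or.inr ⟨S.eV v, heC, Ne.symm (S.diag_ne_of_edge heT u), v,
                S.mem_eV_iff.mpr (Or.inr h'), S.self_mem_eV v⟩
          · exact Or.inr ⟨s, (hmemc s).mpr (Or.inr ⟨hs, hsd⟩), hsne, x, hx1, hx2⟩
      -- minimality among order-respecting edges
      have hminOR : ∀ e', S.OrderResp c e' → S.vle v (S.iota e') := by
        intro e' hOR'
        by_contra hnle
        have hlt : S.vlt (S.iota e') v := S.vlt_of_not_vle hnle
        obtain ⟨he'c, he'T, hcond⟩ := hOR'
        have he'ne : e' ≠ S.eV v := by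
          intro h
          rw [h, hio] at hlt
          exact hlt.2 rfl
        have he'c₀ : e' ∈ c₀ := (((hmemc e').mp he'c).resolve_left he'ne).1
        have hORc₀ : S.OrderResp c₀ e' := by
          refine ⟨he'c₀, he'T, fun w hwr hdw htauw => ?_⟩
          by_cases hwv : w = v
          · rw [hwv]
            exact hlt
          · have hdwc : Sym2.diag w ∈ c := (hmemc _).mpr
              (Or.inr ⟨hdw, fun hh => hwv (Sym2.diag_injective hh)⟩)
            exact hcond w hwr hdwc htauw
        classical
        obtain ⟨e'', he''t, hmin''⟩ := S.exists_vle_min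
          (c₀.filter (fun e0 => S.OrderResp c₀ e0))
          ⟨e', Finset.mem_filter.mpr ⟨he'c₀, ⟨he'c₀, he'T, hORc₀.2.2⟩⟩⟩
        have hOR'' : S.OrderResp c₀ e'' := (Finset.mem_filter.mp he''t).2
        have hRHS₀ : ∃ e : Sym2 V, S.MinOrderResp c₀ e ∧
            ∀ w : V, Sym2.diag w ∈ c₀ → S.vlt w (S.iota e) → S.Blocked c₀ w := by
          refine ⟨e'', ⟨hOR'', fun f hf => hmin'' f (Finset.mem_filter.mpr ⟨hf.1, hf⟩)⟩, ?_⟩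
          intro w hdw hwlt
          by_contra hnb
          have h1 : S.vle (S.iota e'') (S.iota e') :=
            hmin'' e' (Finset.mem_filter.mpr ⟨he'c₀, hORc₀⟩)
          have hwv : S.vlt w v :=
            S.vlt_trans_vle (S.vlt_trans_vle hwlt h1) hlt.1
          exact (S.not_vle_of_vlt hwv) (hmin w ⟨hdw, hnb⟩)
        have hdim₀ : dim c₀ ≤ k := by
          have h := S.dim_redFrom hc₀ hunb
          rw [← hceq] at h
          omega
        have hcol₀ : S.Collapsible n c₀ := (ih c₀ hdim₀ hc₀).mpr hRHS₀
        exact ((S.redundant_iff hc₀).mp hred₀).2 hcol₀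
      refine ⟨S.eV v, ⟨hOR, fun e' h => ?_⟩, fun u hdu hult => ?_⟩
      · rw [hio]
        exact hminOR e' h
      · rw [hio] at hult
        exact hblk u hdu hult
    · -- Backward direction
      rintro ⟨e, ⟨⟨hec, heT, hcond⟩, hminO⟩, hblk⟩
      obtain ⟨hir, hta, hev, hvlt_ti⟩ := S.edge_struct heT
      set v := S.iota e with hv
      have hvin : v ∈ e := S.iota_mem heT
      have hdvnc : Sym2.diag v ∉ c := by
        intro h
        exact S.diag_ne_of_edge heT v (S.cell_disj hc h hec (mem_diag_iff.mpr rfl) hvin)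
      set c₀ : Finset (Sym2 V) := insert (Sym2.diag v) (c.erase e) with hc₀def
      have hmemc₀ : ∀ s : Sym2 V, s ∈ c₀ ↔ (s = Sym2.diag v ∨ (s ∈ c ∧ s ≠ e)) := by
        intro s
        rw [hc₀def, Finset.mem_insert, Finset.mem_erase]
        tauto
      have henc₀ : e ∉ c₀ := by
        rw [hmemc₀]
        rintro (h | ⟨_, h2⟩)
        · exact S.diag_ne_of_edge heT v h.symm
        · exact h2 rfl
      have hdv₀ : Sym2.diag v ∈ c₀ := by
        rw [hc₀def]
        exact Finset.mem_insert_self _ _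
      -- c₀ is a cell
      have hcell₀ : S.IsCell n c₀ := by
        refine ⟨?_, ?_, ?_⟩
        · rw [hc₀def, Finset.card_insert_of_notMem
            (fun h => hdvnc (Finset.mem_of_mem_erase h)),
            Finset.card_erase_of_mem hec, hc.1]
          have : 0 < n := by
            rw [← hc.1]
            exact Finset.card_pos.mpr ⟨e, hec⟩
          omega
        · intro s hs
          rcases (hmemc₀ s).mp hs with h | h
          · rw [h]
            exact Or.inl (Sym2.diag_isDiag v)
          · exact hc.2.1 s h.1
        · intro s hs t ht hst x hxs hxt
          rcases (hmemc₀ s).mp hs with h1 | h1 <;> rcases (hmemc₀ t).mp ht with h2 | h2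
          · exact hst (h1.trans h2.symm)
          · rw [h1] at hxs
            have hxv := mem_diag_iff.mp hxs
            rw [hxv] at hxt
            exact h2.2 (S.cell_disj hc h2.1 hec hxt hvin)
          · rw [h2] at hxt
            have hxv := mem_diag_iff.mp hxt
            rw [hxv] at hxs
            exact h1.2 (S.cell_disj hc h1.1 hec hxs hvin)
          · exact hc.2.2 s h1.1 t h2.1 hst x hxs hxt
      -- v is unblocked in c₀
      have hunb₀ : S.Unblocked c₀ v := by
        refine ⟨hdv₀, ?_⟩
        rintro (h | ⟨s, hs, hsne, x, hx1, hx2⟩)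
        · exact hir h
        · rw [← hev] at hx1
          rcases (hmemc₀ s).mp hs with h' | h'
          · exact hsne h'
          · exact h'.2 (S.cell_disj hc h'.1 hec hx2 hx1)
      -- v is the minimal unblocked vertex of c₀
      have hmin₀ : ∀ u, S.Unblocked c₀ u → S.vle v u := by
        intro u hu
        by_contra hn
        have hlt : S.vlt u v := S.vlt_of_not_vle hn
        have hur : u ≠ S.root := S.unblocked_ne_root hu
        have huv : u ≠ v := hlt.2
        have hdu₀ : Sym2.diag u ∈ c₀ := hu.1
        have hduc : Sym2.diag u ∈ c := by
          rcases (hmemc₀ _).mp hdu₀ with h | h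
          · exact absurd (Sym2.diag_injective h) huv
          · exact h.1
        have hbl : S.Blocked c u := hblk u hduc hlt
        rcases hbl with h | ⟨s, hs, hsne, x, hx1, hx2⟩
        · exact hu.2 (Or.inl h)
        · by_cases hse : s = e
          · -- the blocking element is e itself
            rw [hse] at hx2
            have hxu : x ≠ u := by
              intro hxu
              rw [hxu] at hx2
              exact S.diag_ne_of_edge heT u
                (S.cell_disj hc hduc hec (mem_diag_iff.mpr rfl) hx2)
            have hxp : x = S.par u := (S.mem_eV_iff.mp hx1).resolve_left hxu
            rw [hev] at hx2
            rcases S.mem_eV_iff.mp hx2 with hxv | hxpv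
            · -- par u = v : v blocks u in c₀
              exact hu.2 (Or.inr ⟨Sym2.diag v, hdv₀,
                fun hh => huv (Sym2.diag_injective hh).symm, v,
                S.mem_eV_iff.mpr (Or.inr (hxv ▸ hxp : v = S.par u)),
                mem_diag_iff.mpr rfl⟩)
            · -- par u = par v : the order-respecting condition gives v < u
              have htu : S.tau e ∈ S.eV u := by
                rw [hta, ← hxpv, hxp]
                exact S.par_mem_eV u
              have := hcond u hur hduc htu
              exact (S.not_vle_of_vlt hlt) this.1
          · exact hu.2 (Or.inr ⟨s, (hmemc₀ s).mpr (Or.inr ⟨hs, hse⟩), hsne, x, hx1, hx2⟩)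
      -- c is the principal reduction of c₀ from v
      have hceq : c = S.redFrom c₀ v := by
        have h1 : Sym2.diag v ∉ c.erase e := fun h => hdvnc (Finset.mem_of_mem_erase h)
        unfold redFrom
        rw [hc₀def, Finset.erase_insert h1, ← hev, Finset.insert_erase hec]
      -- dimension bookkeeping
      have hdim₀ : dim c₀ ≤ k := by
        have h := S.dim_redFrom hcell₀ hunb₀
        rw [← hceq] at h
        omega
      -- c₀ is redundant
      have hred₀ : S.Redundant n c₀ := by
        rw [S.redundant_iff hcell₀]
        refine ⟨⟨v, hunb₀⟩, fun hcol => ?_⟩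
        obtain ⟨e'', ⟨⟨he''c₀, he''T, hcond''⟩, hmin''⟩, hblk''⟩ :=
          (ih c₀ hdim₀ hcell₀).mp hcol
        have hvne'' : v ∉ e'' := by
          intro hvm
          exact (S.diag_ne_of_edge he''T v).symm
            (S.cell_disj hcell₀ he''c₀ hdv₀ hvm (mem_diag_iff.mpr rfl)) |>.elim
        have hine : S.iota e'' ≠ v := fun h => hvne'' (h ▸ S.iota_mem he''T)
        have hlt'' : S.vlt (S.iota e'') v := by
          rcases S.vle_total (S.iota e'') v with h | h
          · exact ⟨h, hine⟩
          · exfalso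
            exact hunb₀.2 (hblk'' v hdv₀ ⟨h, Ne.symm hine⟩)
        have he''c : e'' ∈ c := by
          rcases (hmemc₀ _).mp he''c₀ with h | h
          · exact absurd h.symm (S.diag_ne_of_edge he''T v)
          · exact h.1
        have hORc : S.OrderResp c e'' := by
          refine ⟨he''c, he''T, fun w hwr hdw htw => ?_⟩
          have hdw₀ : Sym2.diag w ∈ c₀ := (hmemc₀ _).mpr
            (Or.inr ⟨hdw, S.diag_ne_of_edge heT w⟩)
          exact hcond'' w hwr hdw₀ htw
        have := hminO e'' hORc
        exact (S.not_vle_of_vlt hlt'') this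
      exact ⟨c₀, hcell₀, hred₀, v, hunb₀, hmin₀, hceq⟩

end Setup

/-- **Classification theorem, collapsible cells.**  A cell is collapsible iff it contains
an order-respecting edge and, `e` denoting the minimal order-respecting edge, every vertex
`v` of `c` with `v < ι(e)` is blocked. -/
theorem stmt5 {V : Type} [Fintype V] [DecidableEq V] (S : Setup V) (n : ℕ) (hn : 1 ≤ n) (hsub : S.SuffSubdiv n)
    (c : Finset (Sym2 V)) (hc : S.IsCell n c) :
    S.Collapsible n c ↔
      (∃ e : Sym2 V, S.MinOrderResp c e ∧
        ∀ v : V, Sym2.diag v ∈ c → S.vlt v (S.iota e) → S.Blocked c v) :=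
  S.collapsible_aux n (Setup.dim c) c (le_refl _) hc

end GraphBraid
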